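/- Restricted-dual supermultiplicativity: define Σ⁻(P) as the supremum of trace(S) over S ≥ 0 Hermitian on A, U ≥ 0 on A⊗B with Tr_A U = I_B and P(S ⊗ I_B − U)P ≤ 0. If (S₁, U₁) is feasible for P₁ in this restricted sense and (S₂, U₂) feasible for P₂, then (S₁ ⊗ S₂, U₁ ⊗ U₂) is feasible for P₁ ⊗ P₂; hence Σ⁻(P₁ ⊗ P₂) ≥ Σ⁻(P₁)·Σ⁻(P₂). -/

import Mathlib

open Matrix Kronecker ComplexOrder

/-- Partial trace over the first (`A`) factor. -/
noncomputable def ptraceA {A B : Type*} [Fintype A] (M : Matrix (A × B) (A × B) ℂ) :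
    Matrix B B ℂ :=
  Matrix.of fun b b' => ∑ a : A, M (a, b) (a, b')

/-- Restricted feasibility for `Σ⁻`: additionally `S ≥ 0`. -/
def FeasibleMinus {A B : Type*} [Fintype A] [Fintype B] [DecidableEq B]
    (P : Matrix (A × B) (A × B) ℂ) (S : Matrix A A ℂ) (U : Matrix (A × B) (A × B) ℂ) :
    Prop :=
  S.PosSemidef ∧ U.PosSemidef ∧ ptraceA U = 1 ∧
    (-(P * (S ⊗ₖ (1 : Matrix B B ℂ) - U) * P)).PosSemidef

/-- `Σ⁻(P)`: supremum of `trace S` over restricted feasible pairs. -/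
noncomputable def sigmaMinus {A B : Type*} [Fintype A] [Fintype B] [DecidableEq B]
    (P : Matrix (A × B) (A × B) ℂ) : ℝ :=
  sSup {r : ℝ | ∃ S U, FeasibleMinus P S U ∧ S.trace.re = r}

/-!
Feasibility of the product pair is Loewner monotonicity of `⊗` on positive matrices,
`c ⊗ d - a ⊗ b = (c - a) ⊗ b + c ⊗ (d - b)`, applied to `a = P₁(S₁ ⊗ 1)P₁ ≤ c = P₁U₁P₁` and
`b = P₂(S₂ ⊗ 1)P₂ ≤ d = P₂U₂P₂`; traces multiply.

The inequality between the suprema needs care because `sSup` of an unbounded set of reals is `0`.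
For a projection `P` with a feasible pair, the feasible traces are bounded iff `G = Tr_B P` is
positive definite: feasibility gives `Tr (S G) = Tr (P (S ⊗ 1) P) ≤ Tr U = |B|`, while a kernel
vector `x` of `G` makes `P (x x* ⊗ 1) P` vanish, so that `S + t x x*` stays feasible for all
`t ≥ 0`. Since `Tr_B (P₁ ⊗ P₂) = Tr_B P₁ ⊗ Tr_B P₂`, boundedness passes to the product.
-/

open scoped MatrixOrder

noncomputable def ptraceB {A B : Type*} [Fintype B] (M : Matrix (A × B) (A × B) ℂ) :
    Matrix A A ℂ :=
  Matrix.of fun a a' => ∑ b : B, M (a, b) (a', b)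

theorem Real.sSup_mul_sSup_le {s t u : Set ℝ} (hs : ∀ x ∈ s, 0 ≤ x) (ht : ∀ y ∈ t, 0 ≤ y)
    (hu : BddAbove u) (hu₀ : 0 ≤ sSup u) (hmul : ∀ x ∈ s, ∀ y ∈ t, x * y ∈ u) :
    sSup s * sSup t ≤ sSup u := by
  have hleft : ∀ x ∈ s, x * sSup t ≤ sSup u := fun x hx => by
    rw [← smul_eq_mul, ← Real.sSup_smul_of_nonneg (hs x hx)]
    refine Real.sSup_le ?_ hu₀
    rintro _ ⟨y, hy, rfl⟩
    exact le_csSup hu (hmul x hx y hy)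
  rw [mul_comm, ← smul_eq_mul, ← Real.sSup_smul_of_nonneg (Real.sSup_nonneg ht)]
  refine Real.sSup_le ?_ hu₀
  rintro _ ⟨x, hx, rfl⟩
  exact (mul_comm _ _).trans_le (hleft x hx)

section LoewnerOrder

variable {n m : Type*}

theorem Matrix.trace_mul_nonneg [Fintype n] {X Y : Matrix n n ℂ} (hX : 0 ≤ X) (hY : 0 ≤ Y) :
    0 ≤ (X * Y).trace := by
  classical
  obtain ⟨C, rfl⟩ := CStarAlgebra.nonneg_iff_eq_star_mul_self.mp hY
  rw [← mul_assoc, trace_mul_comm, ← mul_assoc]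
  exact (star_right_conjugate_nonneg hX C).posSemidef.trace_nonneg

theorem Matrix.trace_mul_le_trace_mul [Fintype n] {S X Y : Matrix n n ℂ} (hS : 0 ≤ S)
    (h : X ≤ Y) : (S * X).trace ≤ (S * Y).trace := by
  have := trace_mul_nonneg hS (sub_nonneg.mpr h)
  rwa [mul_sub, trace_sub, sub_nonneg] at this

theorem IsStarProjection.trace_mul_mul_self [Fintype n] {P : Matrix n n ℂ}
    (hP : IsStarProjection P) (X : Matrix n n ℂ) : (P * X * P).trace = (X * P).trace := by
  rw [trace_mul_cycle, hP.isIdempotentElem.eq, trace_mul_comm]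

theorem IsStarProjection.trace_mul_le [Fintype n] [DecidableEq n] {P U : Matrix n n ℂ}
    (hP : IsStarProjection P) (hU : 0 ≤ U) : (U * P).trace ≤ U.trace := by
  simpa using trace_mul_le_trace_mul hU hP.le_one

theorem Matrix.PosDef.exists_pos_smul_one_le [Fintype n] [DecidableEq n] {G : Matrix n n ℂ}
    (hG : G.PosDef) : ∃ c : ℝ, 0 < c ∧ c • (1 : Matrix n n ℂ) ≤ G := by
  cases isEmpty_or_nonempty n
  · exact ⟨1, one_pos, (Subsingleton.elim _ _ : _ = G).le⟩
  · obtain ⟨c, hc, hle⟩ := (CFC.exists_pos_algebraMap_le_iff hG.isHermitian.isSelfAdjoint).2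
      fun _ hx => hG.isStrictlyPositive.spectrum_pos hx
    exact ⟨c, hc, by rwa [Algebra.algebraMap_eq_smul_one] at hle⟩

theorem Matrix.kronecker_nonneg [Fintype n] [Fintype m] {X : Matrix n n ℂ} {Y : Matrix m m ℂ}
    (hX : 0 ≤ X) (hY : 0 ≤ Y) : 0 ≤ X ⊗ₖ Y :=
  (hX.posSemidef.kronecker hY.posSemidef).nonneg

theorem Matrix.kronecker_one_nonneg [Fintype n] [Fintype m] [DecidableEq m] {X : Matrix n n ℂ}
    (hX : 0 ≤ X) : 0 ≤ X ⊗ₖ (1 : Matrix m m ℂ) :=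
  kronecker_nonneg hX zero_le_one

theorem Matrix.kronecker_le_kronecker [Fintype n] [Fintype m] {X₁ Y₁ : Matrix n n ℂ}
    {X₂ Y₂ : Matrix m m ℂ} (h₁ : X₁ ≤ Y₁) (h₂ : X₂ ≤ Y₂) (hY₁ : 0 ≤ Y₁) (hX₂ : 0 ≤ X₂) :
    X₁ ⊗ₖ X₂ ≤ Y₁ ⊗ₖ Y₂ := by
  have hsplit : Y₁ ⊗ₖ Y₂ - X₁ ⊗ₖ X₂ = (Y₁ - X₁) ⊗ₖ X₂ + Y₁ ⊗ₖ (Y₂ - X₂) := by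
    ext; simp only [sub_apply, add_apply, kroneckerMap_apply]; ring
  rw [← sub_nonneg, hsplit]
  exact add_nonneg (kronecker_nonneg (sub_nonneg.mpr h₁) hX₂)
    (kronecker_nonneg hY₁ (sub_nonneg.mpr h₂))

theorem Matrix.reindex_le_reindex (e : n ≃ m) {X Y : Matrix n n ℂ} (h : X ≤ Y) :
    reindex e e X ≤ reindex e e Y := by
  rw [le_iff, reindex_apply, reindex_apply]
  exact (posSemidef_submatrix_equiv e.symm).mpr (le_iff.mp h)

end LoewnerOrder

section PartialTrace

variable {A B : Type*}

theorem trace_ptraceA [Fintype A] [Fintype B] (U : Matrix (A × B) (A × B) ℂ) :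
    (ptraceA U).trace = U.trace := by
  simp only [trace, diag_apply, ptraceA, of_apply, Fintype.sum_prod_type]
  exact Finset.sum_comm

theorem trace_kronecker_one_mul [Fintype A] [Fintype B] [DecidableEq B] (S : Matrix A A ℂ)
    (M : Matrix (A × B) (A × B) ℂ) :
    ((S ⊗ₖ (1 : Matrix B B ℂ)) * M).trace = (S * ptraceB M).trace := by
  simp only [trace, diag_apply, mul_apply, ptraceB, kroneckerMap_apply, of_apply, one_apply,
    Fintype.sum_prod_type, mul_ite, mul_one, mul_zero, ite_mul, zero_mul, Finset.sum_ite_eq,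
    Finset.mem_univ, if_true, Finset.mul_sum]
  exact Finset.sum_congr rfl fun a _ => Finset.sum_comm

theorem ptraceB_eq_sum_submatrix [Fintype B] (M : Matrix (A × B) (A × B) ℂ) :
    ptraceB M = ∑ b : B, M.submatrix (·, b) (·, b) := by
  ext
  simp [ptraceB, Matrix.sum_apply]

theorem Matrix.PosSemidef.ptraceB [Fintype A] [Fintype B] {M : Matrix (A × B) (A × B) ℂ}
    (hM : M.PosSemidef) : (ptraceB M).PosSemidef := by
  rw [ptraceB_eq_sum_submatrix]
  exact posSemidef_sum _ fun b _ => hM.submatrix _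

end PartialTrace

section Feasible

variable {A B : Type*} [Fintype A] [Fintype B] [DecidableEq B]

theorem feasibleMinus_iff {P U : Matrix (A × B) (A × B) ℂ} {S : Matrix A A ℂ} :
    FeasibleMinus P S U ↔
      0 ≤ S ∧ 0 ≤ U ∧ ptraceA U = 1 ∧ P * (S ⊗ₖ (1 : Matrix B B ℂ)) * P ≤ P * U * P := by
  simp only [FeasibleMinus, le_iff, sub_zero, mul_sub, sub_mul, neg_sub]

theorem FeasibleMinus.trace_mul_ptraceB_le {P U : Matrix (A × B) (A × B) ℂ} {S : Matrix A A ℂ}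
    (hP : IsStarProjection P) (h : FeasibleMinus P S U) :
    (S * ptraceB P).trace ≤ Fintype.card B := by
  classical
  obtain ⟨-, hU, htr, hle⟩ := feasibleMinus_iff.mp h
  calc (S * ptraceB P).trace = (P * (S ⊗ₖ (1 : Matrix B B ℂ)) * P).trace := by
        rw [hP.trace_mul_mul_self, trace_kronecker_one_mul]
    _ ≤ (P * U * P).trace := OrderHomClass.mono (tracePositiveLinearMap _ ℂ ℂ) hle
    _ = (U * P).trace := hP.trace_mul_mul_self U
    _ ≤ U.trace := hP.trace_mul_le hU
    _ = Fintype.card B := by rw [← trace_ptraceA, htr, trace_one]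

theorem FeasibleMinus.add_smul {P U : Matrix (A × B) (A × B) ℂ} {S R : Matrix A A ℂ}
    (hP : IsStarProjection P) (h : FeasibleMinus P S U) (hR : 0 ≤ R)
    (hRP : (R * ptraceB P).trace = 0) {t : ℝ} (ht : 0 ≤ t) :
    FeasibleMinus P (S + t • R) U := by
  obtain ⟨hS, hU, htr, hle⟩ := feasibleMinus_iff.mp h
  have hPRP : P * (R ⊗ₖ (1 : Matrix B B ℂ)) * P = 0 := by
    refine (hP.isSelfAdjoint.conjugate_nonneg
      (kronecker_one_nonneg (m := B) hR)).posSemidef.trace_eq_zero_iff.mp ?_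
    rw [hP.trace_mul_mul_self, trace_kronecker_one_mul, hRP]
  refine feasibleMinus_iff.mpr ⟨add_nonneg hS (smul_nonneg ht hR), hU, htr, ?_⟩
  rwa [add_kronecker, smul_kronecker, mul_add, add_mul, mul_smul_comm, smul_mul_assoc, hPRP,
    smul_zero, add_zero]

end Feasible

section Bipartite

variable {A₁ B₁ A₂ B₂ : Type*}

/-- The paper's `M₁ ⊗ M₂`, with the factors regrouped as `(A₁ A₂)(B₁ B₂)`. -/
def bipartiteKronecker (M₁ : Matrix (A₁ × B₁) (A₁ × B₁) ℂ)
    (M₂ : Matrix (A₂ × B₂) (A₂ × B₂) ℂ) :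
    Matrix ((A₁ × A₂) × (B₁ × B₂)) ((A₁ × A₂) × (B₁ × B₂)) ℂ :=
  reindex (Equiv.prodProdProdComm A₁ B₁ A₂ B₂) (Equiv.prodProdProdComm A₁ B₁ A₂ B₂) (M₁ ⊗ₖ M₂)

infixl:100 " ⊗ᵦ " => bipartiteKronecker

theorem bipartiteKronecker_mul [Fintype A₁] [Fintype B₁] [Fintype A₂] [Fintype B₂]
    (M₁ N₁ : Matrix (A₁ × B₁) (A₁ × B₁) ℂ) (M₂ N₂ : Matrix (A₂ × B₂) (A₂ × B₂) ℂ) :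
    M₁ ⊗ᵦ M₂ * N₁ ⊗ᵦ N₂ = (M₁ * N₁) ⊗ᵦ (M₂ * N₂) := by
  simp only [bipartiteKronecker, reindex_apply, submatrix_mul_equiv, mul_kronecker_mul]

theorem IsSelfAdjoint.bipartiteKronecker {M₁ : Matrix (A₁ × B₁) (A₁ × B₁) ℂ}
    {M₂ : Matrix (A₂ × B₂) (A₂ × B₂) ℂ} (h₁ : IsSelfAdjoint M₁) (h₂ : IsSelfAdjoint M₂) :
    IsSelfAdjoint (M₁ ⊗ᵦ M₂) := by
  rw [IsSelfAdjoint, star_eq_conjTranspose, _root_.bipartiteKronecker, reindex_apply,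
    conjTranspose_submatrix, conjTranspose_kronecker, ← star_eq_conjTranspose,
    ← star_eq_conjTranspose, h₁.star_eq, h₂.star_eq]

theorem IsStarProjection.bipartiteKronecker [Fintype A₁] [Fintype B₁] [Fintype A₂]
    [Fintype B₂] {P₁ : Matrix (A₁ × B₁) (A₁ × B₁) ℂ} {P₂ : Matrix (A₂ × B₂) (A₂ × B₂) ℂ}
    (h₁ : IsStarProjection P₁) (h₂ : IsStarProjection P₂) : IsStarProjection (P₁ ⊗ᵦ P₂) where
  isIdempotentElem := by
    rw [IsIdempotentElem, bipartiteKronecker_mul, h₁.isIdempotentElem.eq, h₂.isIdempotentElem.eq]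
  isSelfAdjoint := h₁.isSelfAdjoint.bipartiteKronecker h₂.isSelfAdjoint

theorem bipartiteKronecker_nonneg [Fintype A₁] [Fintype B₁] [Fintype A₂] [Fintype B₂]
    {M₁ : Matrix (A₁ × B₁) (A₁ × B₁) ℂ} {M₂ : Matrix (A₂ × B₂) (A₂ × B₂) ℂ}
    (h₁ : 0 ≤ M₁) (h₂ : 0 ≤ M₂) : 0 ≤ M₁ ⊗ᵦ M₂ :=
  reindex_le_reindex _ (kronecker_nonneg h₁ h₂)

theorem bipartiteKronecker_le_bipartiteKronecker [Fintype A₁] [Fintype B₁] [Fintype A₂]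
    [Fintype B₂] {X₁ Y₁ : Matrix (A₁ × B₁) (A₁ × B₁) ℂ} {X₂ Y₂ : Matrix (A₂ × B₂) (A₂ × B₂) ℂ}
    (h₁ : X₁ ≤ Y₁) (h₂ : X₂ ≤ Y₂) (hY₁ : 0 ≤ Y₁) (hX₂ : 0 ≤ X₂) : X₁ ⊗ᵦ X₂ ≤ Y₁ ⊗ᵦ Y₂ :=
  reindex_le_reindex _ (kronecker_le_kronecker h₁ h₂ hY₁ hX₂)

theorem ptraceA_bipartiteKronecker [Fintype A₁] [Fintype A₂]
    (M₁ : Matrix (A₁ × B₁) (A₁ × B₁) ℂ) (M₂ : Matrix (A₂ × B₂) (A₂ × B₂) ℂ) :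
    ptraceA (M₁ ⊗ᵦ M₂) = ptraceA M₁ ⊗ₖ ptraceA M₂ := by
  ext
  simp only [ptraceA, bipartiteKronecker, of_apply, reindex_apply, submatrix_apply,
    Equiv.prodProdProdComm_symm, Equiv.prodProdProdComm_apply, kroneckerMap_apply,
    Fintype.sum_prod_type, Finset.sum_mul_sum]

theorem ptraceB_bipartiteKronecker [Fintype B₁] [Fintype B₂]
    (M₁ : Matrix (A₁ × B₁) (A₁ × B₁) ℂ) (M₂ : Matrix (A₂ × B₂) (A₂ × B₂) ℂ) :
    ptraceB (M₁ ⊗ᵦ M₂) = ptraceB M₁ ⊗ₖ ptraceB M₂ := by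
  ext
  simp only [ptraceB, bipartiteKronecker, of_apply, reindex_apply, submatrix_apply,
    Equiv.prodProdProdComm_symm, Equiv.prodProdProdComm_apply, kroneckerMap_apply,
    Fintype.sum_prod_type, Finset.sum_mul_sum]

theorem kronecker_kronecker_one [DecidableEq B₁] [DecidableEq B₂] (S₁ : Matrix A₁ A₁ ℂ)
    (S₂ : Matrix A₂ A₂ ℂ) :
    (S₁ ⊗ₖ S₂) ⊗ₖ (1 : Matrix (B₁ × B₂) (B₁ × B₂) ℂ) =
      (S₁ ⊗ₖ (1 : Matrix B₁ B₁ ℂ)) ⊗ᵦ (S₂ ⊗ₖ (1 : Matrix B₂ B₂ ℂ)) := by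
  ext ⟨⟨a₁, a₂⟩, b₁, b₂⟩ ⟨⟨a₁', a₂'⟩, b₁', b₂'⟩
  simp only [bipartiteKronecker, kroneckerMap_apply, reindex_apply, submatrix_apply,
    Equiv.prodProdProdComm_symm, Equiv.prodProdProdComm_apply, one_apply, Prod.mk.injEq]
  by_cases h₁ : b₁ = b₁' <;> by_cases h₂ : b₂ = b₂' <;> simp [h₁, h₂]

theorem FeasibleMinus.bipartiteKronecker [Fintype A₁] [Fintype B₁] [Fintype A₂] [Fintype B₂]
    [DecidableEq B₁] [DecidableEq B₂]
    {P₁ U₁ : Matrix (A₁ × B₁) (A₁ × B₁) ℂ} {S₁ : Matrix A₁ A₁ ℂ}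
    {P₂ U₂ : Matrix (A₂ × B₂) (A₂ × B₂) ℂ} {S₂ : Matrix A₂ A₂ ℂ}
    (hP₁ : IsSelfAdjoint P₁) (hP₂ : IsSelfAdjoint P₂)
    (h₁ : FeasibleMinus P₁ S₁ U₁) (h₂ : FeasibleMinus P₂ S₂ U₂) :
    FeasibleMinus (P₁ ⊗ᵦ P₂) (S₁ ⊗ₖ S₂) (U₁ ⊗ᵦ U₂) := by
  obtain ⟨hS₁, hU₁, htr₁, hle₁⟩ := feasibleMinus_iff.mp h₁
  obtain ⟨hS₂, hU₂, htr₂, hle₂⟩ := feasibleMinus_iff.mp h₂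
  refine feasibleMinus_iff.mpr
    ⟨kronecker_nonneg hS₁ hS₂, bipartiteKronecker_nonneg hU₁ hU₂, ?_, ?_⟩
  · rw [ptraceA_bipartiteKronecker, htr₁, htr₂, one_kronecker_one]
  rw [kronecker_kronecker_one]
  simp only [bipartiteKronecker_mul]
  exact bipartiteKronecker_le_bipartiteKronecker hle₁ hle₂ (hP₁.conjugate_nonneg hU₁)
    (hP₂.conjugate_nonneg (kronecker_one_nonneg (m := B₂) hS₂))

end Bipartite

section FeasibleTraces

variable {A B : Type*} [Fintype A] [Fintype B] [DecidableEq B]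

def feasibleTraces (P : Matrix (A × B) (A × B) ℂ) : Set ℝ :=
  {r : ℝ | ∃ S U, FeasibleMinus P S U ∧ S.trace.re = r}

theorem nonneg_of_mem_feasibleTraces {P : Matrix (A × B) (A × B) ℂ} {r : ℝ}
    (hr : r ∈ feasibleTraces P) : 0 ≤ r := by
  obtain ⟨S, U, h, rfl⟩ := hr
  exact (Complex.nonneg_iff.mp h.1.trace_nonneg).1

theorem bddAbove_feasibleTraces {P : Matrix (A × B) (A × B) ℂ} (hP : IsStarProjection P)
    (hG : (ptraceB P).PosDef) : BddAbove (feasibleTraces P) := by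
  classical
  obtain ⟨c, hc, hcG⟩ := hG.exists_pos_smul_one_le
  refine ⟨Fintype.card B / c, ?_⟩
  rintro _ ⟨S, U, h, rfl⟩
  have hbound : c • S.trace ≤ Fintype.card B := calc
    c • S.trace = (S * (c • 1)).trace := by rw [mul_smul_comm, mul_one, trace_smul]
    _ ≤ (S * ptraceB P).trace := trace_mul_le_trace_mul h.1.nonneg hcG
    _ ≤ Fintype.card B := h.trace_mul_ptraceB_le hP
  rw [le_div_iff₀ hc, mul_comm]
  simpa using (Complex.le_def.mp hbound).1

theorem not_bddAbove_feasibleTraces {P U : Matrix (A × B) (A × B) ℂ} {S : Matrix A A ℂ}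
    (hP : IsStarProjection P) (h : FeasibleMinus P S U) (hG : ¬(ptraceB P).PosDef) :
    ¬BddAbove (feasibleTraces P) := by
  have hGpsd : (ptraceB P).PosSemidef := hP.nonneg.posSemidef.ptraceB
  obtain ⟨x, hx, hGx⟩ : ∃ x ≠ 0, star x ⬝ᵥ ptraceB P *ᵥ x = 0 := by
    simp only [posDef_iff_dotProduct_mulVec, hGpsd.isHermitian, true_and, not_forall] at hG
    obtain ⟨x, hx, hGx⟩ := hG
    exact ⟨x, hx, ((hGpsd.dotProduct_mulVec_nonneg x).eq_of_not_lt hGx).symm⟩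
  set R := vecMulVec x (star x)
  have hRP : (R * ptraceB P).trace = 0 := by
    rw [vecMulVec_mul, trace_vecMulVec, dotProduct_comm, ← dotProduct_mulVec, hGx]
  have hR : 0 < R.trace.re := by
    rw [trace_vecMulVec, dotProduct_comm]
    exact (Complex.pos_iff.mp (dotProduct_star_self_pos_iff.mpr hx)).1
  rintro ⟨M, hM⟩
  set t := (|M - S.trace.re| + 1) / R.trace.re
  have hray := hM ⟨_, U, h.add_smul hP (posSemidef_vecMulVec_self_star x).nonneg hRP
    (by positivity : 0 ≤ t), rfl⟩
  rw [trace_add, trace_smul, Complex.add_re, Complex.smul_re, smul_eq_mul,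
    div_mul_cancel₀ _ hR.ne'] at hray
  linarith [le_abs_self (M - S.trace.re)]

theorem bddAbove_feasibleTraces_iff {P U : Matrix (A × B) (A × B) ℂ} {S : Matrix A A ℂ}
    (hP : IsStarProjection P) (h : FeasibleMinus P S U) :
    BddAbove (feasibleTraces P) ↔ (ptraceB P).PosDef :=
  ⟨fun hb => by_contra fun hG => not_bddAbove_feasibleTraces hP h hG hb,
    bddAbove_feasibleTraces hP⟩

theorem mul_mem_feasibleTraces {A₁ B₁ A₂ B₂ : Type*} [Fintype A₁] [Fintype B₁]
    [Fintype A₂] [Fintype B₂] [DecidableEq B₁] [DecidableEq B₂]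
    {P₁ : Matrix (A₁ × B₁) (A₁ × B₁) ℂ} {P₂ : Matrix (A₂ × B₂) (A₂ × B₂) ℂ} {r₁ r₂ : ℝ}
    (hP₁ : IsSelfAdjoint P₁) (hP₂ : IsSelfAdjoint P₂)
    (hr₁ : r₁ ∈ feasibleTraces P₁) (hr₂ : r₂ ∈ feasibleTraces P₂) :
    r₁ * r₂ ∈ feasibleTraces (P₁ ⊗ᵦ P₂) := by
  obtain ⟨S₁, U₁, h₁, rfl⟩ := hr₁
  obtain ⟨S₂, U₂, h₂, rfl⟩ := hr₂
  refine ⟨S₁ ⊗ₖ S₂, U₁ ⊗ᵦ U₂, h₁.bipartiteKronecker hP₁ hP₂ h₂, ?_⟩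
  rw [trace_kronecker, Complex.mul_re, ← (Complex.nonneg_iff.mp h₁.1.trace_nonneg).2,
    zero_mul, sub_zero]

end FeasibleTraces

theorem sigmaMinus_supermultiplicative_general
    {A₁ B₁ A₂ B₂ : Type*} [Fintype A₁] [Fintype B₁] [Fintype A₂] [Fintype B₂]
    [DecidableEq B₁] [DecidableEq B₂]
    (P₁ U₁ : Matrix (A₁ × B₁) (A₁ × B₁) ℂ) (S₁ : Matrix A₁ A₁ ℂ)
    (P₂ U₂ : Matrix (A₂ × B₂) (A₂ × B₂) ℂ) (S₂ : Matrix A₂ A₂ ℂ)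
    (hP₁herm : P₁.IsHermitian) (hP₁proj : P₁ * P₁ = P₁)
    (hP₂herm : P₂.IsHermitian) (hP₂proj : P₂ * P₂ = P₂)
    (h₁ : FeasibleMinus P₁ S₁ U₁) (h₂ : FeasibleMinus P₂ S₂ U₂) :
    FeasibleMinus (Matrix.reindex (Equiv.prodProdProdComm A₁ B₁ A₂ B₂)
        (Equiv.prodProdProdComm A₁ B₁ A₂ B₂) (P₁ ⊗ₖ P₂))
      (S₁ ⊗ₖ S₂)
      (Matrix.reindex (Equiv.prodProdProdComm A₁ B₁ A₂ B₂)
        (Equiv.prodProdProdComm A₁ B₁ A₂ B₂) (U₁ ⊗ₖ U₂)) ∧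
    sigmaMinus P₁ * sigmaMinus P₂ ≤
      sigmaMinus (Matrix.reindex (Equiv.prodProdProdComm A₁ B₁ A₂ B₂)
        (Equiv.prodProdProdComm A₁ B₁ A₂ B₂) (P₁ ⊗ₖ P₂)) := by
  have hP₁ : IsStarProjection P₁ := ⟨hP₁proj, hP₁herm⟩
  have hP₂ : IsStarProjection P₂ := ⟨hP₂proj, hP₂herm⟩
  have h := h₁.bipartiteKronecker hP₁herm hP₂herm h₂
  refine ⟨h, ?_⟩
  change sSup (feasibleTraces P₁) * sSup (feasibleTraces P₂) ≤
    sSup (feasibleTraces (P₁ ⊗ᵦ P₂))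
  have hsup₀ : 0 ≤ sSup (feasibleTraces (P₁ ⊗ᵦ P₂)) :=
    Real.sSup_nonneg fun _ => nonneg_of_mem_feasibleTraces
  by_cases hb₁ : BddAbove (feasibleTraces P₁)
  swap
  · rwa [Real.sSup_of_not_bddAbove hb₁, zero_mul]
  by_cases hb₂ : BddAbove (feasibleTraces P₂)
  swap
  · rwa [Real.sSup_of_not_bddAbove hb₂, mul_zero]
  have hb : BddAbove (feasibleTraces (P₁ ⊗ᵦ P₂)) := by
    rw [bddAbove_feasibleTraces_iff (hP₁.bipartiteKronecker hP₂) h, ptraceB_bipartiteKronecker]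
    exact ((bddAbove_feasibleTraces_iff hP₁ h₁).mp hb₁).kronecker
      ((bddAbove_feasibleTraces_iff hP₂ h₂).mp hb₂)
  exact Real.sSup_mul_sSup_le (fun _ => nonneg_of_mem_feasibleTraces)
    (fun _ => nonneg_of_mem_feasibleTraces) hb hsup₀
    fun _ hr₁ _ hr₂ => mul_mem_feasibleTraces hP₁herm hP₂herm hr₁ hr₂

/-- Restricted-dual supermultiplicativity: if `(S₁, U₁)` is `Σ⁻`-feasible for
`P₁` and `(S₂, U₂)` is `Σ⁻`-feasible for `P₂`, then `(S₁ ⊗ S₂, U₁ ⊗ U₂)` is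
`Σ⁻`-feasible for `P₁ ⊗ P₂`; hence `Σ⁻(P₁ ⊗ P₂) ≥ Σ⁻(P₁) · Σ⁻(P₂)`. -/
theorem sigmaMinus_supermultiplicative
    {A₁ B₁ A₂ B₂ : Type*} [Fintype A₁] [Fintype B₁] [Fintype A₂] [Fintype B₂]
    [DecidableEq A₁] [DecidableEq B₁] [DecidableEq A₂] [DecidableEq B₂]
    (P₁ U₁ : Matrix (A₁ × B₁) (A₁ × B₁) ℂ) (S₁ : Matrix A₁ A₁ ℂ)
    (P₂ U₂ : Matrix (A₂ × B₂) (A₂ × B₂) ℂ) (S₂ : Matrix A₂ A₂ ℂ)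
    (hP₁herm : P₁.IsHermitian) (hP₁proj : P₁ * P₁ = P₁)
    (hP₂herm : P₂.IsHermitian) (hP₂proj : P₂ * P₂ = P₂)
    (h₁ : FeasibleMinus P₁ S₁ U₁) (h₂ : FeasibleMinus P₂ S₂ U₂) :
    FeasibleMinus (Matrix.reindex (Equiv.prodProdProdComm A₁ B₁ A₂ B₂)
        (Equiv.prodProdProdComm A₁ B₁ A₂ B₂) (P₁ ⊗ₖ P₂))
      (S₁ ⊗ₖ S₂)
      (Matrix.reindex (Equiv.prodProdProdComm A₁ B₁ A₂ B₂)
        (Equiv.prodProdProdComm A₁ B₁ A₂ B₂) (U₁ ⊗ₖ U₂)) ∧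
    sigmaMinus P₁ * sigmaMinus P₂ ≤
      sigmaMinus (Matrix.reindex (Equiv.prodProdProdComm A₁ B₁ A₂ B₂)
        (Equiv.prodProdProdComm A₁ B₁ A₂ B₂) (P₁ ⊗ₖ P₂)) :=
  sigmaMinus_supermultiplicative_general P₁ U₁ S₁ P₂ U₂ S₂ hP₁herm hP₁proj hP₂herm hP₂proj h₁ h₂
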